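/- Let q be a self-join-free Boolean conjunctive query, X a set of variables of q, and G an R-atom of q such that G attacks no variable of X. Let r be a repair satisfying q, A ∈ r an R-fact relevant for q in r, B key-equal to A, and r_B = (r \ {A}) ∪ {B}. Then for every valuation ζ over X, if r_B ⊨ ζ(q) then r ⊨ ζ(q). -/

import Mathlib

/-- A fact `R(a₁,…,aₙ)`: relation name, primary-key values, non-key values. -/
structure DBFact where
  rel : ℕ
  key : List ℕ
  rest : List ℕ
deriving DecidableEq

/-- Two facts are key-equal if they have the same relation name and primary-key value. -/
def keyEq (A B : DBFact) : Prop := A.rel = B.rel ∧ A.key = B.key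

instance (A B : DBFact) : Decidable (keyEq A B) :=
  inferInstanceAs (Decidable (_ ∧ _))

/-- A set of facts is consistent if it contains no two distinct key-equal facts. -/
def Consistent (s : Finset DBFact) : Prop := ∀ A ∈ s, ∀ B ∈ s, keyEq A B → A = B

/-- A repair of `db` is a maximal (w.r.t. ⊆) consistent subset of `db`. -/
def Repair (db r : Finset DBFact) : Prop :=
  r ⊆ db ∧ Consistent r ∧ ∀ r', r' ⊆ db → Consistent r' → r ⊆ r' → r = r'

/-- A term is a variable (inl) or a constant (inr). -/
abbrev Term := ℕ ⊕ ℕ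

/-- An atom `R(t₁,…,tₙ)` with key positions and non-key positions. -/
structure Atom where
  rel : ℕ
  key : List Term
  rest : List Term
deriving DecidableEq

def termVars (l : List Term) : Finset ℕ := (l.filterMap fun t => t.getLeft?).toFinset

/-- Variables at primary-key positions of an atom. -/
def keyVars (F : Atom) : Finset ℕ := termVars F.key

/-- All variables of an atom. -/
def atomVars (F : Atom) : Finset ℕ := termVars F.key ∪ termVars F.rest

/-- A query (finite set of atoms) is self-join-free: no relation name occurs twice. -/
def SJF (q : Finset Atom) : Prop := ∀ F ∈ q, ∀ G ∈ q, F.rel = G.rel → F = G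

/-- Apply a valuation (total map from variables to constants) to an atom, yielding a fact. -/
def applyVal (θ : ℕ → ℕ) (F : Atom) : DBFact :=
  ⟨F.rel, F.key.map (Sum.elim θ id), F.rest.map (Sum.elim θ id)⟩

/-- Semantic implication of a functional dependency `X → Y` by a set of FDs
(two-tuple semantics, which is equivalent to the standard one for FDs). -/
def FDImplies (fds : Set (Set ℕ × Set ℕ)) (X Y : Set ℕ) : Prop :=
  ∀ θ μ : ℕ → ℕ,
    (∀ p ∈ fds, (∀ v ∈ p.1, θ v = μ v) → ∀ v ∈ p.2, θ v = μ v) →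
    (∀ v ∈ X, θ v = μ v) → ∀ v ∈ Y, θ v = μ v

/-- `FD(q) = { key(F) → vars(F) : F ∈ q }`. -/
def FDs (q : Finset Atom) : Set (Set ℕ × Set ℕ) :=
  {p | ∃ F ∈ q, p = ((keyVars F : Set ℕ), (atomVars F : Set ℕ))}

/-- `F⁺ = { x : FD(q \ {F}) ⊨ key(F) → x }`. -/
def plus (q : Finset Atom) (F : Atom) : Set ℕ :=
  {x | FDImplies (FDs (q.erase F)) (keyVars F : Set ℕ) {x}}

/-- One step of a witness for an attack by `F`: consecutive atoms share a variable outside `F⁺`. -/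
def AttackStep (q : Finset Atom) (F : Atom) (A B : Atom) : Prop :=
  ¬ ((atomVars A ∩ atomVars B : Finset ℕ) : Set ℕ) ⊆ plus q F

/-- `F` attacks `G` in the attack graph of `q`. -/
def Attacks (q : Finset Atom) (F G : Atom) : Prop :=
  F ≠ G ∧ F ∈ q ∧ ∃ L : List Atom, (∀ A ∈ L, A ∈ q) ∧
    List.Chain (AttackStep q F) F L ∧ (F :: L).getLast (List.cons_ne_nil F L) = G

/-- `F` attacks the variable `z`. -/
def AttacksVar (q : Finset Atom) (F : Atom) (z : ℕ) : Prop :=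
  z ∉ plus q F ∧ F ∈ q ∧ ∃ L : List Atom, (∀ A ∈ L, A ∈ q) ∧
    List.Chain (AttackStep q F) F L ∧ z ∈ atomVars ((F :: L).getLast (List.cons_ne_nil F L))

/-- `r ⊨ ζ(q)` for a valuation `ζ` over the variable set `X`. -/
def Sat (r : Finset DBFact) (q : Finset Atom) (X : Finset ℕ) (ζ : ℕ → ℕ) : Prop :=
  ∃ θ : ℕ → ℕ, (∀ v ∈ X, θ v = ζ v) ∧ ∀ F ∈ q, applyVal θ F ∈ r

/-- `r ⊨ q`. -/
def Sat0 (r : Finset DBFact) (q : Finset Atom) : Prop :=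
  ∃ θ : ℕ → ℕ, ∀ F ∈ q, applyVal θ F ∈ r

/-- A fact `A` is relevant for `q` in `r` if `A ∈ θ(q) ⊆ r` for some valuation `θ`. -/
def Relevant (A : DBFact) (q : Finset Atom) (r : Finset DBFact) : Prop :=
  ∃ θ : ℕ → ℕ, (∃ F ∈ q, applyVal θ F = A) ∧ ∀ F ∈ q, applyVal θ F ∈ r

/-!
If `θ(G) ≠ B`, the witness `θ` of `ζ(q)` in `r_B` already lies in `r`. Otherwise `θ(G) = B` is
key-equal to `ν(G) = A` for the embedding `ν` witnessing relevance of `A`, so by consistency of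
the repair `θ` and `ν` agree on `G⁺`. The new witness takes `ν` on the variables of the atoms
reachable from `G` along attack steps and `θ` elsewhere: atoms outside that region meet it only in
`G⁺`, so the glued valuation maps every atom into `r`, and on the unattacked variables of `X`
it still agrees with `θ`, hence with `ζ`.
-/

lemma mem_termVars {v : ℕ} {l : List Term} : v ∈ termVars l ↔ Sum.inl v ∈ l := by
  simp only [termVars, List.mem_toFinset, List.mem_filterMap]
  constructor
  · rintro ⟨(w | c), ht, h⟩ <;> simp_all [Sum.getLeft?]
  · exact fun h => ⟨Sum.inl v, h, rfl⟩

lemma map_sumElim_eq_iff {θ ν : ℕ → ℕ} {l : List Term} :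
    l.map (Sum.elim θ id) = l.map (Sum.elim ν id) ↔ ∀ v ∈ termVars l, θ v = ν v := by
  rw [List.map_eq_map_iff]
  constructor
  · exact fun h v hv => by simpa using h _ (mem_termVars.mp hv)
  · rintro h (v | c) ht
    · simpa using h v (mem_termVars.mpr ht)
    · rfl

lemma applyVal_key_eq_iff {θ ν : ℕ → ℕ} {F : Atom} :
    (applyVal θ F).key = (applyVal ν F).key ↔ ∀ v ∈ keyVars F, θ v = ν v :=
  map_sumElim_eq_iff

lemma applyVal_eq_iff {θ ν : ℕ → ℕ} {F : Atom} :
    applyVal θ F = applyVal ν F ↔ ∀ v ∈ atomVars F, θ v = ν v := by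
  simp only [applyVal, DBFact.mk.injEq, true_and, map_sumElim_eq_iff, atomVars,
    Finset.mem_union, or_imp, forall_and]

/-- Consistency of `r` makes each dependency `key(F) → vars(F)` of `FD(q \ {G})` hold between
the two embeddings. -/
lemma eqOn_plus_of_consistent {r : Finset DBFact} (hr : Consistent r) {q : Finset Atom}
    {G : Atom} {θ ν : ℕ → ℕ} (hθ : ∀ F ∈ q.erase G, applyVal θ F ∈ r)
    (hν : ∀ F ∈ q.erase G, applyVal ν F ∈ r) (hkey : ∀ v ∈ keyVars G, θ v = ν v) :
    ∀ v ∈ plus q G, θ v = ν v := by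
  intro v hv
  refine hv θ ν ?_ hkey v rfl
  rintro _ ⟨F, hF, rfl⟩ hagree
  exact applyVal_eq_iff.mp
    (hr _ (hθ F hF) _ (hν F hF) ⟨rfl, applyVal_key_eq_iff.mpr hagree⟩)

def AttackReachable (q : Finset Atom) (G H : Atom) : Prop :=
  G ∈ q ∧ ∃ L : List Atom, (∀ A ∈ L, A ∈ q) ∧
    List.IsChain (AttackStep q G) (G :: L) ∧ (G :: L).getLast (List.cons_ne_nil G L) = H

namespace AttackReachable

variable {q : Finset Atom} {G H : Atom}

lemma refl (hG : G ∈ q) : AttackReachable q G G :=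
  ⟨hG, [], by simp, List.IsChain.singleton G, rfl⟩

lemma tail {H' : Atom} {v : ℕ} (h : AttackReachable q G H) (hH' : H' ∈ q)
    (hvH : v ∈ atomVars H) (hvH' : v ∈ atomVars H') (hv : v ∉ plus q G) :
    AttackReachable q G H' := by
  obtain ⟨hG, L, hL, hchain, rfl⟩ := h
  refine ⟨hG, L ++ [H'], ?_, ?_, by simp⟩
  · simpa [or_imp, forall_and] using ⟨hL, hH'⟩
  · refine List.IsChain.append hchain (List.IsChain.singleton H') ?_
    simp only [List.getLast?_eq_some_getLast (List.cons_ne_nil G L), List.head?_cons,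
      Option.mem_def, Option.some.injEq]
    rintro _ rfl _ rfl hsub
    exact hv (hsub (Finset.mem_coe.mpr (Finset.mem_inter.mpr ⟨hvH, hvH'⟩)))

lemma attacksVar {x : ℕ} (h : AttackReachable q G H) (hx : x ∈ atomVars H)
    (hxp : x ∉ plus q G) : AttacksVar q G x := by
  obtain ⟨hG, L, hL, hchain, rfl⟩ := h
  exact ⟨hxp, hG, L, hL, hchain, hx⟩

end AttackReachable

noncomputable def spliceVal (q : Finset Atom) (G : Atom) (θ ν : ℕ → ℕ) (v : ℕ) : ℕ :=
  open Classical in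
  if ∃ H, AttackReachable q G H ∧ v ∈ atomVars H then ν v else θ v

section spliceVal

variable {q : Finset Atom} {G : Atom} {θ ν : ℕ → ℕ}

lemma spliceVal_of_not_attacksVar (hplus : ∀ v ∈ plus q G, θ v = ν v) {x : ℕ}
    (hx : ¬ AttacksVar q G x) : spliceVal q G θ ν x = θ x := by
  unfold spliceVal
  split_ifs with h
  · obtain ⟨H, hH, hxH⟩ := h
    by_contra hne
    exact hx (hH.attacksVar hxH fun hxp => hne (hplus x hxp).symm)
  · rfl

lemma applyVal_spliceVal_of_reachable {F : Atom} (hF : AttackReachable q G F) :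
    applyVal (spliceVal q G θ ν) F = applyVal ν F :=
  applyVal_eq_iff.mpr fun _ hv => if_pos ⟨F, hF, hv⟩

/-- A variable that `F` shares with a reachable atom lies in `G⁺`, where `θ` and `ν` agree,
since otherwise `F` would be reachable too. -/
lemma applyVal_spliceVal_of_not_reachable (hplus : ∀ v ∈ plus q G, θ v = ν v) {F : Atom}
    (hFq : F ∈ q) (hF : ¬ AttackReachable q G F) :
    applyVal (spliceVal q G θ ν) F = applyVal θ F := by
  refine applyVal_eq_iff.mpr fun v hv => ?_
  unfold spliceVal
  split_ifs with h
  · obtain ⟨H, hH, hvH⟩ := h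
    by_contra hne
    exact hF (hH.tail hFq hvH hv fun hvp => hne (hplus v hvp).symm)
  · rfl

lemma applyVal_spliceVal_mem {r : Finset DBFact} (hplus : ∀ v ∈ plus q G, θ v = ν v)
    (hθ : ∀ F ∈ q, F ≠ G → applyVal θ F ∈ r) (hν : ∀ F ∈ q, applyVal ν F ∈ r) :
    ∀ F ∈ q, applyVal (spliceVal q G θ ν) F ∈ r := by
  intro F hF
  by_cases hreach : AttackReachable q G F
  · rw [applyVal_spliceVal_of_reachable hreach]
    exact hν F hF
  · have hFG : F ≠ G := by
      rintro rfl
      exact hreach (.refl hF)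
    rw [applyVal_spliceVal_of_not_reachable hplus hF hreach]
    exact hθ F hF hFG

end spliceVal

theorem dontcarebis_general (q : Finset Atom) (hq : SJF q) (X : Finset ℕ)
    (G : Atom) (hG : G ∈ q)
    (hnatt : ∀ x ∈ X, ¬ AttacksVar q G x)
    (r : Finset DBFact) (hr : ∃ db, Repair db r)
    (A : DBFact) (hArel : A.rel = G.rel) (hrel : Relevant A q r)
    (B : DBFact) (hkeq : keyEq A B) :
    ∀ ζ : ℕ → ℕ, Sat (insert B (r.erase A)) q X ζ → Sat r q X ζ := by
  rintro ζ ⟨θ, hθX, hθ⟩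
  have hθB : ∀ F ∈ q, applyVal θ F = B → F = G := fun F hF h =>
    hq F hF G hG (by rw [← hArel, hkeq.1, ← h]; rfl)
  have hθ_mem : ∀ F ∈ q, applyVal θ F ≠ B → applyVal θ F ∈ r := fun F hF hne =>
    Finset.mem_of_mem_erase (Finset.mem_of_mem_insert_of_ne (hθ F hF) hne)
  by_cases hGB : applyVal θ G = B
  · obtain ⟨ν, ⟨F₀, hF₀, hνA⟩, hν⟩ := hrel
    obtain rfl : G = F₀ := (hq F₀ hF₀ G hG (by rw [← hArel, ← hνA]; rfl)).symm
    have hθr : ∀ F ∈ q, F ≠ G → applyVal θ F ∈ r := fun F hF hFG =>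
      hθ_mem F hF (mt (hθB F hF) hFG)
    have hplus : ∀ v ∈ plus q G, θ v = ν v :=
      eqOn_plus_of_consistent hr.choose_spec.2.1
        (fun F hF => hθr F (Finset.mem_of_mem_erase hF) (Finset.ne_of_mem_erase hF))
        (fun F hF => hν F (Finset.mem_of_mem_erase hF))
        (applyVal_key_eq_iff.mp (by rw [hGB, hνA, hkeq.2]))
    exact ⟨spliceVal q G θ ν,
      fun x hx => (spliceVal_of_not_attacksVar hplus (hnatt x hx)).trans (hθX x hx),
      applyVal_spliceVal_mem hplus hθr hν⟩
  · exact ⟨θ, hθX, fun F hF => hθ_mem F hF fun h => hGB (hθB F hF h ▸ h)⟩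

/-- Lemma "dontcarebis": if the atom `G` attacks no variable of `X`, `r` is a repair
satisfying `q`, `A ∈ r` is a fact with `G`'s relation name relevant for `q` in `r`, and
`B` is key-equal to `A`, then every instantiation over `X` true in `(r \ {A}) ∪ {B}`
is true in `r`. -/
theorem dontcarebis (q : Finset Atom) (hq : SJF q) (X : Finset ℕ)
    (hX : X ⊆ q.sup atomVars) (G : Atom) (hG : G ∈ q)
    (hnatt : ∀ x ∈ X, ¬ AttacksVar q G x)
    (r : Finset DBFact) (hr : ∃ db, Repair db r) (hrq : Sat0 r q)
    (A : DBFact) (hA : A ∈ r) (hArel : A.rel = G.rel) (hrel : Relevant A q r)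
    (B : DBFact) (hkeq : keyEq A B) :
    ∀ ζ : ℕ → ℕ, Sat (insert B (r.erase A)) q X ζ → Sat r q X ζ :=
  dontcarebis_general q hq X G hG hnatt r hr A hArel hrel B hkeq
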